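/- Let β̂ be the unique minimizer of L_λ for λ > 0. Then for any i ≠ j: β̂_i = β̂_j if and only if d_i = d_j. Moreover, d_i > d_j implies β̂_i > β̂_j. -/

import Mathlib

open Finset

noncomputable def betaBar {n : ℕ} (β : Fin n → ℝ) : ℝ := (n : ℝ)⁻¹ * ∑ i, β i

noncomputable def gradPen {n : ℕ} (d : Fin n → ℝ) (lam : ℝ) (β : Fin n → ℝ) (i : Fin n) : ℝ :=
  (∑ j ∈ Finset.univ.erase i, Real.exp (β i + β j) / (1 + Real.exp (β i + β j)))
    - d i + lam * (β i - betaBar β)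

/-!
Subtracting the first-order conditions of two distinct nodes `i` and `j` cancels the shared
edge term `σ(β̂_i + β̂_j)` and the mean `β̂̄`, leaving `d_i - d_j = g(β̂_i) - g(β̂_j)` for
`g(x) = Σ_{k ≠ i, j} σ(x + β̂_k) + λ x`, with `σ` the logistic sigmoid. Since `σ` is increasing
and `λ > 0`, `g` is strictly increasing, so `β̂_i ↦ d_i` preserves both equality and order.
-/

open Real

lemma Real.exp_div_one_add_exp (x : ℝ) : exp x / (1 + exp x) = sigmoid x := by
  rw [sigmoid_def, exp_neg]
  field_simp
  ring

noncomputable def reducedScore {n : ℕ} (lam : ℝ) (β : Fin n → ℝ) (i j : Fin n) (x : ℝ) : ℝ :=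
  ∑ k ∈ (univ.erase i).erase j, sigmoid (x + β k) + lam * x

lemma strictMono_reducedScore {n : ℕ} {lam : ℝ} (hlam : 0 < lam) (β : Fin n → ℝ) (i j : Fin n) :
    StrictMono (reducedScore lam β i j) := fun x y hxy =>
  add_lt_add_of_le_of_lt (sum_le_sum fun _ _ => sigmoid_le (by linarith))
    (mul_lt_mul_of_pos_left hxy hlam)

lemma gradPen_sub_gradPen {n : ℕ} (d : Fin n → ℝ) (lam : ℝ) (β : Fin n → ℝ) {i j : Fin n}
    (hij : i ≠ j) :
    gradPen d lam β i - gradPen d lam β j =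
      reducedScore lam β i j (β i) - reducedScore lam β i j (β j) - (d i - d j) := by
  have hj : j ∈ univ.erase i := mem_erase.2 ⟨hij.symm, mem_univ j⟩
  have hi : i ∈ univ.erase j := mem_erase.2 ⟨hij, mem_univ i⟩
  simp only [gradPen, reducedScore, exp_div_one_add_exp]
  rw [← add_sum_erase _ _ hj, ← add_sum_erase _ _ hi, erase_right_comm, add_comm (β j) (β i)]
  ring

theorem mle_degree_monotonicity_general (n : ℕ) (d : Fin n → ℝ) (lam : ℝ) (hlam : 0 < lam)
    (βhat : Fin n → ℝ) (hfoc : ∀ i, gradPen d lam βhat i = 0) :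
    (∀ i j : Fin n, i ≠ j → (βhat i = βhat j ↔ d i = d j)) ∧
      (∀ i j : Fin n, i ≠ j → d j < d i → βhat j < βhat i) := by
  have hdiff : ∀ i j, i ≠ j →
      d i - d j = reducedScore lam βhat i j (βhat i) - reducedScore lam βhat i j (βhat j) := by
    intro i j hij
    have h := gradPen_sub_gradPen d lam βhat hij
    rw [hfoc, hfoc] at h
    linarith
  have hg i j := strictMono_reducedScore hlam βhat i j
  refine ⟨fun i j hij => ?_, fun i j hij hd => ?_⟩
  · rw [← sub_eq_zero (a := d i), hdiff i j hij, sub_eq_zero, (hg i j).injective.eq_iff]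
  · have h := sub_pos.2 hd
    rw [hdiff i j hij, sub_pos] at h
    exact (hg i j).lt_iff_lt.1 h

theorem mle_degree_monotonicity (n : ℕ) (hn : 2 ≤ n) (d : Fin n → ℝ) (lam : ℝ) (hlam : 0 < lam)
    (βhat : Fin n → ℝ) (hfoc : ∀ i, gradPen d lam βhat i = 0) :
    (∀ i j : Fin n, i ≠ j → (βhat i = βhat j ↔ d i = d j)) ∧
      (∀ i j : Fin n, i ≠ j → d j < d i → βhat j < βhat i) :=
  mle_degree_monotonicity_general n d lam hlam βhat hfoc
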